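/- arXiv:2008.06529 — 4 statements merged into one kernel-verified Lean document; each statement's English description precedes it below -/
import Mathlib

section
/- For Bernoulli distributions P_b = Bernoulli(p), Q_b = Bernoulli(q) with 0 < q < p < 1 and α > 1, the function h(p,q;α) = (1/(α−1)) log(p^α q^{1−α} + (1−p)^α (1−q)^{1−α}) is strictly decreasing in q on (0, p), i.e., ∂h/∂q < 0 for all 0 < q < p < 1. -/
/-! The prefactor `(α - 1)⁻¹` cancels the factor `1 - α` of the derivative of the sum
`p^α t^(1-α) + (1-p)^α (1-t)^(1-α)`, leaving `-(p^α q^(-α) - (1-p)^α (1-q)^(-α))` over a positive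
denominator; the bracket is positive because `(1-p)/(1-q) < 1 < p/q`. -/

open Real

theorem hasDerivAt_mul_rpow_add_mul_one_sub_rpow (a b s : ℝ) {q : ℝ} (hq : 0 < q) (hq1 : q < 1) :
    HasDerivAt (fun t : ℝ => a * t ^ s + b * (1 - t) ^ s)
      (s * (a * q ^ (s - 1) - b * (1 - q) ^ (s - 1))) q := by
  have h₁ : HasDerivAt (fun t : ℝ => t ^ s) (s * q ^ (s - 1)) q :=
    hasDerivAt_rpow_const (Or.inl hq.ne')
  have h₂ : HasDerivAt (fun t : ℝ => (1 - t) ^ s) (s * (1 - q) ^ (s - 1) * -1) q :=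
    (hasDerivAt_rpow_const (Or.inl (sub_pos.2 hq1).ne')).comp q ((hasDerivAt_id q).const_sub 1)
  exact ((h₁.const_mul a).add (h₂.const_mul b)).congr_deriv (by ring)

theorem one_sub_rpow_mul_one_sub_rpow_neg_lt_rpow_mul_rpow_neg {α p q : ℝ} (hα : 0 < α) (hq : 0 < q) (hqp : q < p)
    (hp : p < 1) : (1 - p) ^ α * (1 - q) ^ (-α) < p ^ α * q ^ (-α) := by
  have hq1 : 0 < 1 - q := by linarith
  have hp1 : 0 ≤ 1 - p := by linarith
  rw [rpow_neg hq.le, rpow_neg hq1.le, ← div_eq_mul_inv, ← div_eq_mul_inv,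
    ← div_rpow hp1 hq1.le, ← div_rpow (hq.trans hqp).le hq.le]
  have hlt : (1 - p) / (1 - q) < p / q :=
    calc (1 - p) / (1 - q) < 1 := (div_lt_one hq1).2 (by linarith)
      _ < p / q := (one_lt_div hq).2 hqp
  exact rpow_lt_rpow (by positivity) hlt hα

theorem stmt6 (α p q : ℝ) (hα : 1 < α) (hq : 0 < q) (hqp : q < p) (hp : p < 1) :
    deriv (fun t : ℝ => (α - 1)⁻¹ *
        Real.log (p ^ α * t ^ (1 - α) + (1 - p) ^ α * (1 - t) ^ (1 - α))) q < 0 := by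
  have hq1 : q < 1 := hqp.trans hp
  have hsum_pos : 0 < p ^ α * q ^ (1 - α) + (1 - p) ^ α * (1 - q) ^ (1 - α) := by
    have : 0 < p := hq.trans hqp
    have : 0 < 1 - q := by linarith
    positivity
  have hderiv := ((hasDerivAt_mul_rpow_add_mul_one_sub_rpow (p ^ α) ((1 - p) ^ α) (1 - α) hq hq1).log
    hsum_pos.ne').const_mul (α - 1)⁻¹
  have hgap := one_sub_rpow_mul_one_sub_rpow_neg_lt_rpow_mul_rpow_neg (zero_lt_one.trans hα) hq hqp hp
  rw [hderiv.deriv, show 1 - α - 1 = -α by ring, ← mul_div_assoc, ← mul_assoc,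
    show (α - 1)⁻¹ * (1 - α) = -1 by field_simp [(sub_pos.2 hα).ne']; ring]
  exact div_neg_of_neg_of_pos (by linarith) hsum_pos
end

section
/- For α > 1, ε ≥ 0, and δ ∈ (0,1): if αδ ≥ 1 then γ_α^ε(δ) = ε − log(1 − δ), and if 0 < αδ < 1 then γ_α^ε(δ) ≥ ε − (1/(α−1)) log(ζ_α/δ), where ζ_α = (1/α)(1 − 1/α)^{α−1}. -/
/-!
Substituting `t = (p - δ) / p` turns the first summand of the binary objective into
`δ / ((1 - t) t^(α-1))`, and the second summand is nonnegative. By Bernoulli's inequality the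
profile `(1 - t) t^(α-1)` increases on `(0, 1 - 1/α]` and is bounded by its value `ζ_α` at
`1 - 1/α`; this gives the lower bound `δ / ζ_α` for the infimum. If `αδ ≥ 1`, then
`t ≤ 1 - δ ≤ 1 - 1/α` for every `p ∈ (δ, 1)`, so the objective is at least
`δ / ((1 - (1 - δ)) (1 - δ)^(α-1)) = (1 - δ)^(1-α)`, which is its limit as `p → 1`.
-/

open Real

/-- The optimal RDP parameter corresponding to an `(ε, δ)`-DP constraint, via the
binary reduction: `γ_α^ε(δ) = ε + (1/(α−1)) log min_{p∈(δ,1)} [p^α(p−δ)^{1−α} + (1−p)^α(e^ε−p+δ)^{1−α}]`. -/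
noncomputable def gammaOpt (α ε δ : ℝ) : ℝ :=
  ε + (α - 1)⁻¹ * Real.log (sInf
    ((fun p : ℝ => p ^ α * (p - δ) ^ (1 - α)
        + (1 - p) ^ α * (Real.exp ε - p + δ) ^ (1 - α)) '' Set.Ioo δ 1))

namespace BinaryReduction

variable {α ε δ t s p B : ℝ}

noncomputable def profile (α t : ℝ) : ℝ := (1 - t) * t ^ (α - 1)

/-- The hypothesis `h` says that `s` lies between `t` and the maximiser `1 - α⁻¹`. -/
lemma profile_le_profile (hα : 1 ≤ α) (ht : 0 < t) (hs : 0 < s) (hs1 : s ≤ 1)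
    (h : 0 ≤ (α * (1 - s) - 1) * (s - t)) : profile α t ≤ profile α s := by
  have hbern : 1 + α * (s / t - 1) ≤ (s / t) ^ α := by
    simpa using one_add_mul_self_le_rpow_one_add (s := s / t - 1) (by linarith [div_pos hs ht]) hα
  rw [div_rpow hs.le ht.le, le_div_iff₀ (rpow_pos_of_pos ht α)] at hbern
  have key : (1 - t) * t ^ α * s ≤ (1 - s) * s ^ α * t := by
    have htα := rpow_pos_of_pos ht α
    calc (1 - t) * t ^ α * s ≤ (1 - s) * t ^ α * (t + α * (s - t)) := by
          nlinarith [mul_nonneg htα.le h]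
      _ = (1 - s) * ((1 + α * (s / t - 1)) * t ^ α) * t := by field_simp
      _ ≤ (1 - s) * s ^ α * t := by gcongr
  unfold profile
  rw [rpow_sub_one ht.ne', rpow_sub_one hs.ne', mul_div_assoc', mul_div_assoc',
    div_le_div_iff₀ ht hs]
  linarith

lemma profile_le_profile_of_le (hα : 1 ≤ α) (ht : 0 < t) (hts : t ≤ s)
    (hs : s ≤ 1 - α⁻¹) : profile α t ≤ profile α s := by
  have hα0 : 0 < α := by linarith
  have hαs : 1 ≤ α * (1 - s) := by
    calc 1 = α * α⁻¹ := (mul_inv_cancel₀ hα0.ne').symm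
      _ ≤ α * (1 - s) := by gcongr; linarith
  refine profile_le_profile hα ht (ht.trans_le hts) ?_ (by nlinarith)
  linarith [inv_pos.2 hα0]

noncomputable def zeta (α : ℝ) : ℝ := α⁻¹ * (1 - α⁻¹) ^ (α - 1)

lemma zeta_pos (hα : 1 < α) : 0 < zeta α :=
  mul_pos (inv_pos.2 (by linarith)) (rpow_pos_of_pos (sub_pos.2 (inv_lt_one_of_one_lt₀ hα)) _)

lemma profile_le_zeta (hα : 1 < α) (ht : 0 < t) : profile α t ≤ zeta α := by
  have hα0 : 0 < α := by linarith
  have hαinv : α⁻¹ < 1 := inv_lt_one_of_one_lt₀ hα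
  have hmax : α * (1 - (1 - α⁻¹)) - 1 = 0 := by field_simp; ring
  have := profile_le_profile (s := 1 - α⁻¹) hα.le ht (by linarith) (by linarith [inv_pos.2 hα0])
    (by rw [hmax, zero_mul])
  simpa [profile, zeta] using this

lemma rpow_mul_rpow_mul_profile (hδ : 0 < δ) (hp : δ < p) :
    p ^ α * (p - δ) ^ (1 - α) * profile α ((p - δ) / p) = δ := by
  have hp0 : 0 < p := hδ.trans hp
  have hpδ : 0 < p - δ := sub_pos.2 hp
  unfold profile
  rw [rpow_sub hpδ, rpow_sub_one (div_pos hpδ hp0).ne', div_rpow hpδ.le hp0.le, rpow_one]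
  field_simp
  ring

lemma div_le_rpow_mul_rpow (hδ : 0 < δ) (hp : δ < p) (hB : 0 < B)
    (h : profile α ((p - δ) / p) ≤ B) : δ / B ≤ p ^ α * (p - δ) ^ (1 - α) := by
  have hpδ : 0 < p - δ := sub_pos.2 hp
  rw [div_le_iff₀ hB]
  calc δ = p ^ α * (p - δ) ^ (1 - α) * profile α ((p - δ) / p) :=
        (rpow_mul_rpow_mul_profile hδ hp).symm
    _ ≤ p ^ α * (p - δ) ^ (1 - α) * B :=
        mul_le_mul_of_nonneg_left h
          (mul_nonneg (rpow_nonneg (hδ.trans hp).le _) (rpow_nonneg hpδ.le _))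

noncomputable def binaryObjective (α ε δ p : ℝ) : ℝ :=
  p ^ α * (p - δ) ^ (1 - α) + (1 - p) ^ α * (Real.exp ε - p + δ) ^ (1 - α)

lemma gammaOpt_eq_sInf_binaryObjective (α ε δ : ℝ) :
    gammaOpt α ε δ = ε + (α - 1)⁻¹ * Real.log (sInf (binaryObjective α ε δ '' Set.Ioo δ 1)) :=
  rfl

lemma rpow_mul_rpow_le_binaryObjective (hε : 0 ≤ ε) (hδ : 0 ≤ δ) (hp : p ∈ Set.Ioo δ 1) :
    p ^ α * (p - δ) ^ (1 - α) ≤ binaryObjective α ε δ p := by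
  have hexp : p - δ < Real.exp ε := by linarith [hp.1, hp.2, one_le_exp hε]
  have : 0 ≤ (1 - p) ^ α * (Real.exp ε - p + δ) ^ (1 - α) :=
    mul_nonneg (rpow_nonneg (by linarith [hp.2]) _) (rpow_nonneg (by linarith) _)
  unfold binaryObjective
  linarith

lemma div_le_sInf_binaryObjective (hε : 0 ≤ ε) (hδ : 0 < δ) (hδ1 : δ < 1) (hB : 0 < B)
    (h : ∀ p ∈ Set.Ioo δ 1, profile α ((p - δ) / p) ≤ B) :
    δ / B ≤ sInf (binaryObjective α ε δ '' Set.Ioo δ 1) := by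
  refine le_csInf ((Set.nonempty_Ioo.2 hδ1).image _) ?_
  rintro _ ⟨p, hp, rfl⟩
  exact (div_le_rpow_mul_rpow hδ hp.1 hB (h p hp)).trans
    (rpow_mul_rpow_le_binaryObjective hε hδ.le hp)

lemma continuousAt_binaryObjective_one (hα : 0 < α) (hε : 0 ≤ ε) (hδ : 0 < δ) (hδ1 : δ < 1) :
    ContinuousAt (binaryObjective α ε δ) 1 := by
  have hbase : (1 : ℝ) - δ ≠ 0 := sub_ne_zero.2 hδ1.ne'
  have hexp : Real.exp ε - 1 + δ ≠ 0 := by linarith [one_le_exp hε]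
  unfold binaryObjective
  fun_prop (disch := first | exact Or.inr hα.le | exact Or.inl one_ne_zero | exact Or.inl ‹_›)

lemma sInf_binaryObjective_le (hα : 0 < α) (hε : 0 ≤ ε) (hδ : 0 < δ) (hδ1 : δ < 1) :
    sInf (binaryObjective α ε δ '' Set.Ioo δ 1) ≤ (1 - δ) ^ (1 - α) := by
  have hbdd : BddBelow (binaryObjective α ε δ '' Set.Ioo δ 1) := by
    refine ⟨0, ?_⟩
    rintro _ ⟨p, hp, rfl⟩
    have hp0 : 0 < p := hδ.trans hp.1
    exact (mul_nonneg (rpow_nonneg hp0.le _) (rpow_nonneg (sub_nonneg.2 hp.1.le) _)).trans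
      (rpow_mul_rpow_le_binaryObjective hε hδ.le hp)
  have hclosure : binaryObjective α ε δ 1 ∈ closure (binaryObjective α ε δ '' Set.Ioo δ 1) :=
    (continuousAt_binaryObjective_one hα hε hδ hδ1).continuousWithinAt.mem_closure_image
      (by rw [closure_Ioo hδ1.ne]; exact ⟨hδ1.le, le_rfl⟩)
  have hone : binaryObjective α ε δ 1 = (1 - δ) ^ (1 - α) := by
    simp [binaryObjective, zero_rpow hα.ne']
  rw [← hone]
  exact closure_minimal (fun _ hx => csInf_le hbdd hx) isClosed_Ici hclosure

lemma sInf_binaryObjective_eq (hα : 1 < α) (hε : 0 ≤ ε) (hδ : 0 < δ) (hδ1 : δ < 1)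
    (h : 1 ≤ α * δ) : sInf (binaryObjective α ε δ '' Set.Ioo δ 1) = (1 - δ) ^ (1 - α) := by
  have hα0 : 0 < α := by linarith
  have h1δ : 0 < 1 - δ := sub_pos.2 hδ1
  have hvalue : δ / profile α (1 - δ) = (1 - δ) ^ (1 - α) := by
    rw [profile, sub_sub_cancel, div_mul_cancel_left₀ hδ.ne', ← rpow_neg h1δ.le, neg_sub]
  refine le_antisymm (sInf_binaryObjective_le hα0 hε hδ hδ1) ?_
  rw [← hvalue]
  refine div_le_sInf_binaryObjective hε hδ hδ1 (by rw [profile, sub_sub_cancel]; positivity) ?_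
  intro p hp
  have hp0 : 0 < p := hδ.trans hp.1
  refine profile_le_profile_of_le hα.le (div_pos (sub_pos.2 hp.1) hp0) ?_ ?_
  · rw [div_le_iff₀ hp0]
    nlinarith [hp.2]
  · linarith [(inv_le_iff_one_le_mul₀' hα0).2 h]

lemma div_zeta_le_sInf_binaryObjective (hα : 1 < α) (hε : 0 ≤ ε) (hδ : 0 < δ) (hδ1 : δ < 1) :
    δ / zeta α ≤ sInf (binaryObjective α ε δ '' Set.Ioo δ 1) :=
  div_le_sInf_binaryObjective hε hδ hδ1 (zeta_pos hα)
    fun _ hp => profile_le_zeta hα (div_pos (sub_pos.2 hp.1) (hδ.trans hp.1))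

end BinaryReduction

open BinaryReduction

theorem stmt8 (α ε δ : ℝ) (hα : 1 < α) (hε : 0 ≤ ε) (hδ : δ ∈ Set.Ioo (0:ℝ) 1) :
    (1 ≤ α * δ → gammaOpt α ε δ = ε - Real.log (1 - δ))
    ∧ (α * δ < 1 →
        ε - (α - 1)⁻¹ * Real.log ((α⁻¹ * (1 - α⁻¹) ^ (α - 1)) / δ) ≤ gammaOpt α ε δ) := by
  obtain ⟨hδ0, hδ1⟩ := hδ
  have hα1 : 0 < α - 1 := sub_pos.2 hα
  rw [gammaOpt_eq_sInf_binaryObjective]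
  refine ⟨fun h => ?_, fun _ => ?_⟩
  · rw [sInf_binaryObjective_eq hα hε hδ0 hδ1 h, log_rpow (sub_pos.2 hδ1)]
    field_simp
    ring
  · have hlog := log_le_log (div_pos hδ0 (zeta_pos hα))
      (div_zeta_le_sInf_binaryObjective hα hε hδ0 hδ1)
    rw [← zeta, ← inv_div, log_inv]
    linarith [mul_le_mul_of_nonneg_left hlog (inv_nonneg.2 hα1.le)]
end

section
/- For α > 1, ε ≥ 0, and 0 < αδ < 1: γ_α^ε(δ) ≥ ε + (1/(α−1)) log( (e^ε − αδ)((δ−1)/(δ−e^ε))^α + αδ ), with equality if and only if δ = 0. -/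
/-!
Write `f(p) = g(p, p - δ) + g(1 - p, e^ε - p + δ)` with `g(x, y) = x^α y^{1-α}`, a convex
function that lies above its tangent planes. Bounding the second summand by its tangent along
the ray through `c = (1 - δ)/(e^ε - δ)` and the first by a tangent along `((1 - δ)⁻¹, 1)` gives
`f(p) ≥ B + κ (p - δ)` on `(δ, 1)`, where `B` is the claimed bound and `κ ≥ 0` is a Bernoulli
gap, positive iff `δ > 0`. For `δ > 0` the infimum is therefore strictly above `B`: near `p = δ`
the first summand blows up like `(p - δ)^{1-α}`, and away from `δ` the slope `κ` helps.
For `δ = 0`, `f(p) → B` as `p → 0⁺`.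
-/

open Real

open Set Filter Topology

/-- Tangent plane of `(x, y) ↦ x ^ α * y ^ (1 - α)` at `(c, 1)`; it is Bernoulli's inequality
for `(x / (c y)) ^ α`. -/
lemma tangent_le_rpow_mul_rpow_one_sub {α x y c : ℝ} (hα : 1 ≤ α) (hx : 0 ≤ x) (hy : 0 < y)
    (hc : 0 < c) : α * c ^ (α - 1) * x + (1 - α) * c ^ α * y ≤ x ^ α * y ^ (1 - α) := by
  have hcy : 0 < c * y := mul_pos hc hy
  have hbern := one_add_mul_self_le_rpow_one_add
    (by linarith [div_nonneg hx hcy.le] : -1 ≤ x / (c * y) - 1) hα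
  rw [add_sub_cancel, div_rpow hx hcy.le, le_div_iff₀ (by positivity), mul_rpow hc.le hy.le]
    at hbern
  have hc_pow : c ^ α = c ^ (α - 1) * c := by rw [← rpow_add_one hc.ne']; ring_nf
  have hy_pow : y ^ α * y ^ (1 - α) = y := by rw [← rpow_add hy]; simp
  calc α * c ^ (α - 1) * x + (1 - α) * c ^ α * y
      = (1 + α * (x / (c * y) - 1)) * (c ^ α * y ^ α) * y ^ (1 - α) := by
        rw [mul_assoc _ _ (y ^ (1 - α)), mul_assoc (c ^ α), hy_pow, hc_pow]
        field_simp
        ring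
    _ ≤ x ^ α * y ^ (1 - α) := by gcongr

noncomputable def bernoulliGap (α s : ℝ) : ℝ := (1 + s) ^ α - 1 - α * s

lemma bernoulliGap_nonneg {α s : ℝ} (hα : 1 ≤ α) (hs : -1 ≤ s) : 0 ≤ bernoulliGap α s := by
  unfold bernoulliGap
  linarith [one_add_mul_self_le_rpow_one_add hs hα]

lemma bernoulliGap_pos {α s : ℝ} (hα : 1 < α) (hs : -1 ≤ s) (hs₀ : s ≠ 0) :
    0 < bernoulliGap α s := by
  unfold bernoulliGap
  linarith [one_add_mul_self_lt_rpow_one_add hs hs₀ hα]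

lemma one_add_div_one_sub {δ : ℝ} (hδ : δ < 1) : 1 + δ / (1 - δ) = (1 - δ)⁻¹ := by
  field_simp [(sub_pos.mpr hδ).ne']
  ring

/-- With `t₀ = (1 - δ)⁻¹`, this is the tangent bound of `x ^ α * y ^ (1 - α)` in direction
`(t₀, 1)`, weakened via `t₀ ^ (α - 1) ≥ 1`. -/
lemma le_rpow_mul_sub_rpow_one_sub {α δ p : ℝ} (hα : 1 ≤ α) (hδ : 0 ≤ δ) (hδp : δ < p)
    (hp : p < 1) :
    p + (α - 1) * δ + bernoulliGap α (δ / (1 - δ)) * (p - δ) ≤ p ^ α * (p - δ) ^ (1 - α) := by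
  have hδ1 : 0 < 1 - δ := by linarith
  set t₀ := (1 - δ)⁻¹ with ht₀
  have ht₀_one : 1 ≤ t₀ := one_le_inv₀ hδ1 |>.mpr (by linarith)
  have hgap : bernoulliGap α (δ / (1 - δ)) = t₀ ^ α - 1 - α * (t₀ - 1) := by
    have hs : δ / (1 - δ) = t₀ - 1 := by rw [ht₀, ← one_add_div_one_sub (by linarith)]; ring
    rw [bernoulliGap, hs, add_sub_cancel]
  have hpow : t₀ ^ α = t₀ ^ (α - 1) * t₀ := by rw [← rpow_add_one (by positivity)]; ring_nf
  have hslack : 0 ≤ α * (t₀ ^ (α - 1) - 1) * (δ * (1 - p) / (1 - δ)) := by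
    have : 1 ≤ t₀ ^ (α - 1) := one_le_rpow ht₀_one (by linarith)
    have : 0 ≤ δ * (1 - p) / (1 - δ) := div_nonneg (mul_nonneg hδ (by linarith)) hδ1.le
    positivity
  calc p + (α - 1) * δ + bernoulliGap α (δ / (1 - δ)) * (p - δ)
      = α * t₀ ^ (α - 1) * p + (1 - α) * t₀ ^ α * (p - δ)
          - α * (t₀ ^ (α - 1) - 1) * (δ * (1 - p) / (1 - δ)) := by
        rw [hgap, hpow, ht₀]
        field_simp
        ring
    _ ≤ α * t₀ ^ (α - 1) * p + (1 - α) * t₀ ^ α * (p - δ) := by linarith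
    _ ≤ p ^ α * (p - δ) ^ (1 - α) :=
        tangent_le_rpow_mul_rpow_one_sub hα (by linarith) (by linarith) (by positivity)

noncomputable def binaryRenyiSum (α ε δ p : ℝ) : ℝ :=
  p ^ α * (p - δ) ^ (1 - α) + (1 - p) ^ α * (exp ε - p + δ) ^ (1 - α)

noncomputable def binaryRenyiBound (α ε δ : ℝ) : ℝ :=
  (exp ε - α * δ) * ((1 - δ) / (exp ε - δ)) ^ α + α * δ

lemma gammaOpt_eq (α ε δ : ℝ) :
    gammaOpt α ε δ = ε + (α - 1)⁻¹ * log (sInf (binaryRenyiSum α ε δ '' Ioo δ 1)) :=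
  rfl

section

variable {α ε δ : ℝ}

/-- The second summand of `binaryRenyiSum` is bounded by its tangent plane at
`(c, 1)`, `c = (1 - δ) / (e^ε - δ)`. -/
lemma binaryRenyiBound_add_le_binaryRenyiSum (hα : 1 ≤ α) (hε : 0 ≤ ε) (hδ : 0 ≤ δ) {p : ℝ}
    (hp : p ∈ Ioo δ 1) :
    binaryRenyiBound α ε δ + bernoulliGap α (δ / (1 - δ)) * (p - δ) ≤ binaryRenyiSum α ε δ p := by
  obtain ⟨hδp, hp1⟩ := hp
  have hE : 1 ≤ exp ε := one_le_exp hε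
  set c := (1 - δ) / (exp ε - δ) with hc_def
  have hc : 0 < c := div_pos (by linarith) (by linarith)
  have hc_pow : c ^ α = c ^ (α - 1) * c := by rw [← rpow_add_one hc.ne']; ring_nf
  have hc_mul : c * (exp ε - δ) = 1 - δ := div_mul_cancel₀ _ (by linarith)
  have hfirst := le_rpow_mul_sub_rpow_one_sub hα hδ hδp hp1
  have hsecond := tangent_le_rpow_mul_rpow_one_sub hα (by linarith : 0 ≤ 1 - p)
    (by linarith : 0 < exp ε - p + δ) hc
  have hslack : 0 ≤ (p - δ) * (1 - α * c ^ (α - 1) + (α - 1) * c ^ α) := by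
    have := tangent_le_rpow_mul_rpow_one_sub hα zero_le_one one_pos hc
    simp only [one_rpow, mul_one] at this
    exact mul_nonneg (by linarith) (by linarith)
  have hsum : p + (α - 1) * δ
      + (α * c ^ (α - 1) * (1 - p) + (1 - α) * c ^ α * (exp ε - p + δ))
      = binaryRenyiBound α ε δ + (p - δ) * (1 - α * c ^ (α - 1) + (α - 1) * c ^ α) := by
    rw [binaryRenyiBound, ← hc_def, hc_pow]
    linear_combination (-α) * c ^ (α - 1) * hc_mul
  rw [binaryRenyiSum]
  linarith

lemma binaryRenyiBound_mem_lowerBounds (hα : 1 ≤ α) (hε : 0 ≤ ε) (hδ : 0 ≤ δ) :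
    binaryRenyiBound α ε δ ∈ lowerBounds (binaryRenyiSum α ε δ '' Ioo δ 1) := by
  rintro _ ⟨p, hp, rfl⟩
  have hgap : 0 ≤ bernoulliGap α (δ / (1 - δ)) :=
    bernoulliGap_nonneg hα (by linarith [div_nonneg hδ (by linarith [hp.1, hp.2] : 0 ≤ 1 - δ)])
  exact le_of_add_le_of_nonneg_left (binaryRenyiBound_add_le_binaryRenyiSum hα hε hδ hp)
    (mul_nonneg hgap (by linarith [hp.1]))

lemma binaryRenyiBound_le_sInf (hα : 1 ≤ α) (hε : 0 ≤ ε) (hδ : 0 ≤ δ) (hδ1 : δ < 1) :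
    binaryRenyiBound α ε δ ≤ sInf (binaryRenyiSum α ε δ '' Ioo δ 1) :=
  le_csInf ((nonempty_Ioo.mpr hδ1).image _) (binaryRenyiBound_mem_lowerBounds hα hε hδ)

lemma binaryRenyiBound_lt_sInf (hα : 1 < α) (hε : 0 ≤ ε) (hδ : 0 < δ) (hδ1 : δ < 1) :
    binaryRenyiBound α ε δ < sInf (binaryRenyiSum α ε δ '' Ioo δ 1) := by
  set B := binaryRenyiBound α ε δ
  set κ := bernoulliGap α (δ / (1 - δ))
  have hκ : 0 < κ := bernoulliGap_pos hα (by linarith [div_pos hδ (sub_pos.mpr hδ1)])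
    (div_pos hδ (sub_pos.mpr hδ1)).ne'
  have hblow : ∀ᶠ q in 𝓝[>] 0, B + 1 ≤ δ ^ α * q ^ (1 - α) :=
    ((tendsto_rpow_neg_nhdsGT_zero (by linarith : 1 - α < 0)).const_mul_atTop
      (by positivity)).eventually_ge_atTop _
  obtain ⟨r, hr, hr_blow⟩ := (nhdsGT_basis 0).eventually_iff.mp hblow
  have hgap : ∀ s ∈ binaryRenyiSum α ε δ '' Ioo δ 1, B + min 1 (κ * r) ≤ s := by
    rintro _ ⟨p, hp, rfl⟩
    have hpδ : 0 < p - δ := sub_pos.mpr hp.1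
    rcases lt_or_ge (p - δ) r with hpr | hpr
    · calc B + min 1 (κ * r) ≤ B + 1 := by gcongr; exact min_le_left _ _
        _ ≤ δ ^ α * (p - δ) ^ (1 - α) := hr_blow ⟨hpδ, hpr⟩
        _ ≤ p ^ α * (p - δ) ^ (1 - α) := by gcongr; exact hp.1.le
        _ ≤ binaryRenyiSum α ε δ p := by
          refine le_add_of_nonneg_right (mul_nonneg (rpow_nonneg ?_ _) (rpow_nonneg ?_ _))
          · linarith [hp.2]
          · linarith [one_le_exp hε, hp.2]
    · calc B + min 1 (κ * r) ≤ B + κ * (p - δ) := by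
            gcongr; exact (min_le_right _ _).trans (by gcongr)
        _ ≤ binaryRenyiSum α ε δ p :=
          binaryRenyiBound_add_le_binaryRenyiSum hα.le hε hδ.le hp
  calc B < B + min 1 (κ * r) := lt_add_of_pos_right _ (lt_min one_pos (mul_pos hκ hr))
    _ ≤ sInf (binaryRenyiSum α ε δ '' Ioo δ 1) := le_csInf ((nonempty_Ioo.mpr hδ1).image _) hgap

lemma sInf_binaryRenyiSum_zero (hα : 1 ≤ α) (hε : 0 ≤ ε) :
    sInf (binaryRenyiSum α ε 0 '' Ioo 0 1) = binaryRenyiBound α ε 0 := by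
  refine le_antisymm ?_ (binaryRenyiBound_le_sInf hα hε le_rfl one_pos)
  set g : ℝ → ℝ := fun p ↦ p + (1 - p) ^ α * (exp ε - p) ^ (1 - α)
  have hg : ∀ p ∈ Ioo (0 : ℝ) 1, binaryRenyiSum α ε 0 p = g p := fun p hp ↦ by
    rw [binaryRenyiSum, sub_zero, add_zero, ← rpow_add hp.1, add_sub_cancel, rpow_one]
  have hg0 : g 0 = binaryRenyiBound α ε 0 := by
    simp only [g, binaryRenyiBound, sub_zero, mul_zero, zero_add, add_zero, one_rpow, one_mul,
      inv_rpow (exp_pos ε).le, rpow_sub (exp_pos ε), rpow_one, div_eq_mul_inv]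
  have hg_cont : ContinuousAt g 0 := by
    refine continuousAt_id.add (ContinuousAt.mul ?_ ?_) <;>
      refine (continuousAt_const.sub continuousAt_id).rpow_const (Or.inl ?_)
    · norm_num
    · simp [(exp_pos ε).ne']
  refine ge_of_tendsto (hg0 ▸ hg_cont.tendsto.mono_left (nhdsWithin_le_nhds (s := Ioi 0))) ?_
  filter_upwards [Ioo_mem_nhdsGT one_pos] with p hp
  exact hg p hp ▸ csInf_le ⟨_, binaryRenyiBound_mem_lowerBounds hα hε le_rfl⟩ ⟨p, hp, rfl⟩

lemma binaryRenyiBound_pos (hα : 0 ≤ α) (hε : 0 ≤ ε) (hδ : 0 ≤ δ) (hδ1 : δ < 1)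
    (hαδ : α * δ < 1) : 0 < binaryRenyiBound α ε δ := by
  have hE : 1 ≤ exp ε := one_le_exp hε
  have hc : 0 < (1 - δ) / (exp ε - δ) := div_pos (by linarith) (by linarith)
  have : 0 < (exp ε - α * δ) * ((1 - δ) / (exp ε - δ)) ^ α :=
    mul_pos (by linarith) (rpow_pos_of_pos hc α)
  exact add_pos_of_pos_of_nonneg this (mul_nonneg hα hδ)

end

theorem stmt9 (α ε δ : ℝ) (hα : 1 < α) (hε : 0 ≤ ε) (hδ : 0 ≤ δ) (hαδ : α * δ < 1) :
    (ε + (α - 1)⁻¹ * Real.log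
        ((Real.exp ε - α * δ) * ((δ - 1) / (δ - Real.exp ε)) ^ α + α * δ) ≤ gammaOpt α ε δ)
    ∧ (gammaOpt α ε δ
        = ε + (α - 1)⁻¹ * Real.log
            ((Real.exp ε - α * δ) * ((δ - 1) / (δ - Real.exp ε)) ^ α + α * δ)
      ↔ δ = 0) := by
  have hδ1 : δ < 1 := by nlinarith
  have hB : (exp ε - α * δ) * ((δ - 1) / (δ - exp ε)) ^ α + α * δ = binaryRenyiBound α ε δ := by
    rw [binaryRenyiBound, ← neg_div_neg_eq, neg_sub, neg_sub]
  have hB_pos := binaryRenyiBound_pos (by linarith) hε hδ hδ1 hαδ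
  have hle := binaryRenyiBound_le_sInf hα.le hε hδ hδ1
  have hmono : StrictMonoOn (fun x ↦ ε + (α - 1)⁻¹ * log x) (Ioi 0) := fun x hx y _ hxy ↦
    add_lt_add_right (mul_lt_mul_of_pos_left (log_lt_log hx hxy) (by simpa using hα)) ε
  rw [gammaOpt_eq, hB, hmono.injOn.eq_iff (hB_pos.trans_le hle) hB_pos]
  refine ⟨hmono.monotoneOn hB_pos (hB_pos.trans_le hle) hle, fun h ↦ ?_, ?_⟩
  · by_contra hδ0
    exact (binaryRenyiBound_lt_sInf hα hε (hδ.lt_of_ne' hδ0) hδ1).ne' h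
  · rintro rfl
    exact sInf_binaryRenyiSum_zero hα.le hε
end

section
/- For α > 1, ε ≥ 0, δ ∈ [0,1), and p ∈ (δ,1), the function δ ↦ p^α (p−δ)^{1−α} + (1−p)^α (e^ε − p + δ)^{1−α} is convex in δ, and hence bounded below by its first-order Taylor expansion at δ = 0: p + (α−1)δ + ((1−p)/(e^ε−p))^α (e^ε − p − (α−1)δ). -/
open Real Set

/-!
For `q ≤ 0`, `x ↦ x ^ q = exp (q log x)` is convex on `(0, ∞)`. With `c = e^ε - p`, the function
of `δ` is a nonnegative combination of such powers of the affine functions `p - δ` and `c + δ`,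
hence convex on `(-c, p)`, and a convex function lies above its tangent line at `δ = 0`.
-/

theorem convexOn_rpow_of_nonpos {q : ℝ} (hq : q ≤ 0) :
    ConvexOn ℝ (Ioi 0) fun x : ℝ => x ^ q := by
  refine ⟨convex_Ioi 0, fun x hx y hy a b ha hb hab => ?_⟩
  have hxy : 0 < a • x + b • y := (convex_Ioi 0) hx hy ha hb hab
  simp only [smul_eq_mul] at hxy ⊢
  calc (a * x + b * y) ^ q = exp (q * log (a * x + b * y)) := by
        rw [rpow_def_of_pos hxy, mul_comm]
    _ ≤ exp (a * (q * log x) + b * (q * log y)) := by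
        gcongr
        have hlog := strictConcaveOn_log_Ioi.concaveOn.2 hx hy ha hb hab
        simp only [smul_eq_mul] at hlog
        nlinarith [mul_le_mul_of_nonpos_left hlog hq]
    _ ≤ a * exp (q * log x) + b * exp (q * log y) :=
        convexOn_exp.2 (mem_univ _) (mem_univ _) ha hb hab
    _ = a * x ^ q + b * y ^ q := by
        rw [rpow_def_of_pos hx, rpow_def_of_pos hy, mul_comm q, mul_comm q]

theorem convexOn_rpow_comp_affine {q : ℝ} (hq : q ≤ 0) (a b : ℝ) :
    ConvexOn ℝ {x | 0 < a + b * x} fun x : ℝ => (a + b * x) ^ q := by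
  let g : ℝ →ᵃ[ℝ] ℝ := b • AffineMap.id ℝ ℝ + AffineMap.const ℝ ℝ a
  have hg : ∀ x, g x = a + b * x := fun x => by simp [g, add_comm]
  have hs : {x | 0 < a + b * x} = g ⁻¹' Ioi 0 := by ext; simp [hg]
  rw [hs]
  exact ((convexOn_rpow_of_nonpos hq).comp_affineMap g).congr fun x _ => by simp [hg]

theorem ConvexOn.add_mul_sub_le_of_hasDerivWithinAt {S : Set ℝ} {f : ℝ → ℝ} {x y f' : ℝ}
    (hf : ConvexOn ℝ S f) (hx : x ∈ S) (hy : y ∈ S) (hf' : HasDerivWithinAt f f' S x) :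
    f x + f' * (y - x) ≤ f y := by
  rcases lt_trichotomy x y with hxy | rfl | hxy
  · have := hf.le_slope_of_hasDerivWithinAt hx hy hxy hf'
    rw [slope_def_field, le_div_iff₀ (sub_pos.2 hxy)] at this
    linarith
  · simp
  · have := hf.slope_le_of_hasDerivWithinAt hy hx hxy hf'
    rw [slope_def_field, div_le_iff₀ (sub_pos.2 hxy)] at this
    linarith

theorem rpow_mul_rpow_one_sub_sub_one {α x y : ℝ} (hx : 0 < x) (hy : 0 ≤ y) :
    y ^ α * x ^ (1 - α - 1) = (y / x) ^ α := by
  rw [div_rpow hy hx.le, show 1 - α - 1 = -α by ring, rpow_neg hx.le, div_eq_mul_inv]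

theorem rpow_mul_rpow_one_sub {α x y : ℝ} (hx : 0 < x) (hy : 0 ≤ y) :
    y ^ α * x ^ (1 - α) = (y / x) ^ α * x := by
  rw [← rpow_mul_rpow_one_sub_sub_one hx hy, mul_assoc, ← rpow_add_one hx.ne']
  ring_nf

section

variable {α p c : ℝ}

theorem convexOn_mul_rpow_sub_add_mul_rpow_add (hα : 1 ≤ α) (hp₀ : 0 ≤ p) (hp₁ : p ≤ 1) :
    ConvexOn ℝ (Ioo (-c) p)
      (fun δ => p ^ α * (p - δ) ^ (1 - α) + (1 - p) ^ α * (c + δ) ^ (1 - α)) := by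
  have hq : 1 - α ≤ 0 := by linarith
  have hsub : ConvexOn ℝ (Ioo (-c) p) fun δ => (p + -1 * δ) ^ (1 - α) :=
    (convexOn_rpow_comp_affine hq p (-1)).subset
      (fun δ hδ => show 0 < p + -1 * δ by linarith [hδ.2]) (convex_Ioo _ _)
  have hadd : ConvexOn ℝ (Ioo (-c) p) fun δ => (c + 1 * δ) ^ (1 - α) :=
    (convexOn_rpow_comp_affine hq c 1).subset
      (fun δ hδ => show 0 < c + 1 * δ by linarith [hδ.1]) (convex_Ioo _ _)
  refine ((hsub.smul (rpow_nonneg hp₀ α)).add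
    (hadd.smul (rpow_nonneg (sub_nonneg.2 hp₁) α))).congr fun δ _ => ?_
  simp [sub_eq_add_neg]

theorem hasDerivAt_mul_rpow_sub_add_mul_rpow_add_zero (hp₀ : 0 < p) (hp₁ : p ≤ 1) (hc : 0 < c) :
    HasDerivAt (fun δ => p ^ α * (p - δ) ^ (1 - α) + (1 - p) ^ α * (c + δ) ^ (1 - α))
      ((α - 1) * (1 - ((1 - p) / c) ^ α)) 0 := by
  have h₁ := (((hasDerivAt_id (0:ℝ)).const_sub p).rpow_const (p := 1 - α)
    (Or.inl (by simpa using hp₀.ne'))).const_mul (p ^ α)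
  have h₂ := (((hasDerivAt_id (0:ℝ)).const_add c).rpow_const (p := 1 - α)
    (Or.inl (by simpa using hc.ne'))).const_mul ((1 - p) ^ α)
  refine (h₁.add h₂).congr_deriv ?_
  have e₁ : p ^ α * p ^ (1 - α - 1) = 1 := by
    rw [rpow_mul_rpow_one_sub_sub_one hp₀ hp₀.le, div_self hp₀.ne', one_rpow]
  have e₂ := rpow_mul_rpow_one_sub_sub_one (α := α) hc (sub_nonneg.2 hp₁)
  simp only [id, sub_zero, add_zero]
  linear_combination (α - 1) * e₁ + (1 - α) * e₂

theorem le_mul_rpow_sub_add_mul_rpow_add (hα : 1 ≤ α) (hp₀ : 0 < p) (hp₁ : p ≤ 1) (hc : 0 < c)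
    {δ : ℝ} (hδ : δ ∈ Ioo (-c) p) :
    p + (α - 1) * δ + ((1 - p) / c) ^ α * (c - (α - 1) * δ)
      ≤ p ^ α * (p - δ) ^ (1 - α) + (1 - p) ^ α * (c + δ) ^ (1 - α) := by
  have h := ConvexOn.add_mul_sub_le_of_hasDerivWithinAt
    (convexOn_mul_rpow_sub_add_mul_rpow_add hα hp₀.le hp₁) ⟨neg_neg_of_pos hc, hp₀⟩ hδ
    (hasDerivAt_mul_rpow_sub_add_mul_rpow_add_zero hp₀ hp₁ hc).hasDerivWithinAt
  have e₁ : p ^ α * p ^ (1 - α) = p := by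
    rw [rpow_mul_rpow_one_sub hp₀ hp₀.le, div_self hp₀.ne', one_rpow, one_mul]
  have e₂ := rpow_mul_rpow_one_sub (α := α) hc (sub_nonneg.2 hp₁)
  simp only [sub_zero, add_zero, e₁, e₂] at h
  linarith

end

theorem stmt10 (α ε p : ℝ) (hα : 1 < α) (hε : 0 ≤ ε) (hp : p ∈ Set.Ioo (0:ℝ) 1) :
    ConvexOn ℝ (Set.Ico 0 p)
      (fun δ : ℝ => p ^ α * (p - δ) ^ (1 - α)
        + (1 - p) ^ α * (Real.exp ε - p + δ) ^ (1 - α))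
    ∧ ∀ δ ∈ Set.Ico (0:ℝ) p,
        p + (α - 1) * δ + ((1 - p) / (Real.exp ε - p)) ^ α * (Real.exp ε - p - (α - 1) * δ)
          ≤ p ^ α * (p - δ) ^ (1 - α) + (1 - p) ^ α * (Real.exp ε - p + δ) ^ (1 - α) := by
  obtain ⟨hp₀, hp₁⟩ := hp
  have hc : 0 < exp ε - p := by linarith [one_le_exp hε]
  have hIco : Ico 0 p ⊆ Ioo (-(exp ε - p)) p := fun δ hδ => ⟨by linarith [hδ.1], hδ.2⟩
  exact ⟨(convexOn_mul_rpow_sub_add_mul_rpow_add hα.le hp₀.le hp₁.le).subset hIco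
    (convex_Ico 0 p), fun δ hδ => le_mul_rpow_sub_add_mul_rpow_add hα.le hp₀ hp₁.le hc (hIco hδ)⟩
end
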